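/- arXiv:2503.13376 — 4 statements merged into one kernel-verified Lean document; each statement's English description precedes it below -/
import Mathlib

section
/- Let H be a separable Hilbert space and (W_j) a sequence of bounded operators on H such that the series ∑_j W_j* W_j converges weakly to a bounded operator. Then for every bounded operator A on H, the partial sums ∑_{j=1}^N W_j* A W_j converge in the weak operator topology to a bounded operator Φ'(A), and ‖Φ'(A)‖ ≤ ‖A‖ · ‖Φ'(1)‖. -/
/-!
The map `V : H → ℓ²(ℕ, H)`, `x ↦ (W j x)ⱼ`, is well defined because `∑ ‖W j x‖² = ⟪x, Φ'(1) x⟫`,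
and it satisfies `V† V = Φ'(1)`. Then `Φ'(A) = V† (A ⊕ A ⊕ ⋯) V`, and the C⋆-identity
`‖V‖² = ‖V† V‖` gives `‖Φ'(A)‖ ≤ ‖A‖ ‖Φ'(1)‖`.
-/

open scoped InnerProductSpace ENNReal

namespace lp

variable {ι 𝕜 E F : Type*} [NontriviallyNormedField 𝕜]
  [NormedAddCommGroup E] [NormedSpace 𝕜 E] [CompleteSpace E]
  [NormedAddCommGroup F] [NormedSpace 𝕜 F] [CompleteSpace F]
  {p : ℝ≥0∞} [Fact (1 ≤ p)]

noncomputable def liftCLM (W : ι → E →L[𝕜] F) (hW : ∀ x, Memℓp (fun i => W i x) p) :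
    E →L[𝕜] lp (fun _ : ι => F) p :=
  ContinuousLinearMap.ofSeqClosedGraph
    (g := { toFun x := ⟨fun i => W i x, hW x⟩
            map_add' x y := by ext i; exact map_add (W i) x y
            map_smul' c x := by ext i; exact map_smul (W i) c x })
    fun u x y hu hVu => by
      ext i
      exact tendsto_nhds_unique ((evalCLM 𝕜 _ p i).continuous.tendsto y |>.comp hVu)
        (((W i).continuous.tendsto x).comp hu)

@[simp]
theorem liftCLM_apply (W : ι → E →L[𝕜] F) (hW : ∀ x, Memℓp (fun i => W i x) p) (x : E)
    (i : ι) : liftCLM W hW x i = W i x :=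
  rfl

end lp

namespace ContinuousLinearMap

variable {𝕜 E F : Type*} [RCLike 𝕜] [NormedAddCommGroup E] [InnerProductSpace 𝕜 E]
  [CompleteSpace E] [NormedAddCommGroup F] [InnerProductSpace 𝕜 F] [CompleteSpace F]

theorem norm_adjoint_comp_comp_le (V : E →L[𝕜] F) (D : F →L[𝕜] F) :
    ‖V.adjoint ∘L D ∘L V‖ ≤ ‖D‖ * ‖V.adjoint ∘L V‖ :=
  calc ‖V.adjoint ∘L D ∘L V‖ ≤ ‖V.adjoint‖ * (‖D‖ * ‖V‖) :=
        (V.adjoint.opNorm_comp_le _).trans (by gcongr; exact D.opNorm_comp_le V)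
    _ = ‖D‖ * ‖V.adjoint ∘L V‖ := by
        rw [adjoint.norm_map, norm_adjoint_comp_self]
        ring

end ContinuousLinearMap

section

variable {ι 𝕜 H : Type*} [RCLike 𝕜] [NormedAddCommGroup H] [InnerProductSpace 𝕜 H]
  [CompleteSpace H] {W : ι → H →L[𝕜] H} {Y : H →L[𝕜] H}

theorem memℓp_two_apply_of_hasSum_inner_adjoint_comp_self
    (hY : ∀ x y : H, HasSum (fun j => ⟪x, ((W j).adjoint ∘L W j) y⟫_𝕜) ⟪x, Y y⟫_𝕜) (x : H) :
    Memℓp (fun j => W j x) 2 := by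
  have hsum : Summable fun j => ((‖W j x‖ ^ 2 : ℝ) : 𝕜) := by
    simpa [ContinuousLinearMap.adjoint_inner_right, inner_self_eq_norm_sq_to_K] using
      (hY x x).summable
  refine memℓp_gen ?_
  simpa using (RCLike.summable_ofReal 𝕜).mp hsum

theorem adjoint_comp_liftCLM_eq_of_hasSum_inner
    (hY : ∀ x y : H, HasSum (fun j => ⟪x, ((W j).adjoint ∘L W j) y⟫_𝕜) ⟪x, Y y⟫_𝕜) :
    (lp.liftCLM W (memℓp_two_apply_of_hasSum_inner_adjoint_comp_self hY)).adjoint ∘L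
      lp.liftCLM W (memℓp_two_apply_of_hasSum_inner_adjoint_comp_self hY) = Y := by
  refine ContinuousLinearMap.ext fun y => ext_inner_left 𝕜 fun x => ?_
  rw [ContinuousLinearMap.comp_apply, ContinuousLinearMap.adjoint_inner_right]
  refine (lp.hasSum_inner _ _).unique ?_
  simpa [ContinuousLinearMap.adjoint_inner_right] using hY x y

end

theorem stmt0_general
    {H : Type*} [NormedAddCommGroup H] [InnerProductSpace ℂ H] [CompleteSpace H]
    (W : ℕ → H →L[ℂ] H) (Y : H →L[ℂ] H)
    (hY : ∀ x y : H,
      HasSum (fun j => ⟪x, ((W j).adjoint ∘L (W j)) y⟫_ℂ) ⟪x, Y y⟫_ℂ) :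
    ∀ A : H →L[ℂ] H, ∃ ΦA : H →L[ℂ] H,
      (∀ x y : H,
        HasSum (fun j => ⟪x, ((W j).adjoint ∘L A ∘L (W j)) y⟫_ℂ) ⟪x, ΦA y⟫_ℂ) ∧
      ‖ΦA‖ ≤ ‖A‖ * ‖Y‖ := by
  intro A
  set V := lp.liftCLM W (memℓp_two_apply_of_hasSum_inner_adjoint_comp_self hY)
  set D := lp.mapCLM 2 (fun _ : ℕ => A) (norm_nonneg A) fun _ => le_rfl
  refine ⟨V.adjoint ∘L D ∘L V, fun x y => ?_, ?_⟩
  · simpa [V, D, ContinuousLinearMap.adjoint_inner_right] using lp.hasSum_inner (V x) (D (V y))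
  · calc ‖V.adjoint ∘L D ∘L V‖ ≤ ‖D‖ * ‖V.adjoint ∘L V‖ := V.norm_adjoint_comp_comp_le D
      _ ≤ ‖A‖ * ‖Y‖ := by
          rw [adjoint_comp_liftCLM_eq_of_hasSum_inner hY]
          gcongr
          exact lp.norm_mapCLM_le _ _ _ _

/-- If `(W j)` are bounded operators on a separable Hilbert space such that
`∑ j, (W j)† (W j)` converges in the weak operator topology to a bounded operator `Y = Φ'(1)`,
then for every bounded `A` the partial sums `∑_{j<N} (W j)† A (W j)` converge in the weak
operator topology to a bounded operator `ΦA`, and `‖ΦA‖ ≤ ‖A‖ * ‖Y‖`. -/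
theorem stmt0
    {H : Type*} [NormedAddCommGroup H] [InnerProductSpace ℂ H] [CompleteSpace H]
    [TopologicalSpace.SeparableSpace H]
    (W : ℕ → H →L[ℂ] H) (Y : H →L[ℂ] H)
    (hY : ∀ x y : H,
      HasSum (fun j => ⟪x, ((W j).adjoint ∘L (W j)) y⟫_ℂ) ⟪x, Y y⟫_ℂ) :
    ∀ A : H →L[ℂ] H, ∃ ΦA : H →L[ℂ] H,
      (∀ x y : H,
        HasSum (fun j => ⟪x, ((W j).adjoint ∘L A ∘L (W j)) y⟫_ℂ) ⟪x, ΦA y⟫_ℂ) ∧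
      ‖ΦA‖ ≤ ‖A‖ * ‖Y‖ :=
  stmt0_general W Y hY
end

section
/- The subspace {A ρ_τ : A ∈ B(H)} is dense in the Hilbert space S_τ = {λ ∈ S₁ : λρ_τ^{-1/2} ∈ S₂} with inner product ⟨λ,μ⟩_{st,τ} = Tr(λ* μ ρ_τ^{-1}). -/
/-!
Taking adjoints preserves the Hilbert–Schmidt norm, and `(κ - A ρ^{1/2})* = κ* - ρ^{1/2} A*`, so
it suffices to approximate the Hilbert–Schmidt operator `κ*` by `ρ^{1/2} B` with `B` bounded.
Being self-adjoint and injective, `ρ^{1/2}` has dense range. Choose `N` so that the tail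
`∑_{i ≥ N} ‖κ* eᵢ‖²` is small, approximate each of the first `N` columns `κ* eᵢ` by some
`ρ^{1/2} yᵢ`, and let `B` be the finite-rank operator sending `eᵢ ↦ yᵢ` for `i < N` and killing
the other basis vectors.
-/

open scoped InnerProductSpace ENNReal

open ContinuousLinearMap InnerProductSpace

section HilbertSchmidt

variable {𝕜 E F ι ι' : Type*} [RCLike 𝕜]
  [NormedAddCommGroup E] [InnerProductSpace 𝕜 E]
  [NormedAddCommGroup F] [InnerProductSpace 𝕜 F]

theorem tsum_norm_sq_eq_toReal (g : ι → E) :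
    ∑' i, ‖g i‖ ^ 2 = (∑' i, ‖g i‖ₑ ^ 2).toReal := by
  rw [ENNReal.tsum_toReal_eq fun i => by simp]
  simp [ENNReal.toReal_pow]

theorem summable_norm_sq_iff (g : ι → E) :
    Summable (fun i => ‖g i‖ ^ 2) ↔ ∑' i, ‖g i‖ₑ ^ 2 ≠ ∞ := by
  simp_rw [enorm_eq_nnnorm, ← ENNReal.coe_pow, ENNReal.tsum_coe_ne_top_iff_summable_coe]
  simp

theorem HilbertBasis.enorm_sq_eq_tsum (e : HilbertBasis ι 𝕜 E) (x : E) :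
    ‖x‖ₑ ^ 2 = ∑' i, ‖⟪e i, x⟫_𝕜‖ₑ ^ 2 := by
  have h := lp.hasSum_norm (p := 2) (by norm_num) (e.repr x)
  simp only [ENNReal.toReal_ofNat, Real.rpow_two, LinearIsometryEquiv.norm_map,
    HilbertBasis.repr_apply_apply] at h
  simp_rw [← ofReal_norm, ← ENNReal.ofReal_pow (norm_nonneg _)]
  rw [← ENNReal.ofReal_tsum_of_nonneg (fun _ => by positivity) h.summable, h.tsum_eq]

theorem HilbertBasis.tsum_enorm_sq_adjoint_apply [CompleteSpace E] [CompleteSpace F]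
    (e : HilbertBasis ι 𝕜 E) (f : HilbertBasis ι' 𝕜 F) (T : E →L[𝕜] F) :
    ∑' j, ‖adjoint T (f j)‖ₑ ^ 2 = ∑' i, ‖T (e i)‖ₑ ^ 2 := by
  have enorm_inner_comm (x y : E) : ‖⟪x, y⟫_𝕜‖ₑ = ‖⟪y, x⟫_𝕜‖ₑ := by
    rw [← ofReal_norm, norm_inner_symm, ofReal_norm]
  simp_rw [e.enorm_sq_eq_tsum (adjoint T _), f.enorm_sq_eq_tsum (T _), enorm_inner_comm (e _),
    adjoint_inner_left]
  exact ENNReal.tsum_comm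

theorem HilbertBasis.summable_norm_sq_adjoint_apply_iff [CompleteSpace E] [CompleteSpace F]
    (e : HilbertBasis ι 𝕜 E) (f : HilbertBasis ι' 𝕜 F) (T : E →L[𝕜] F) :
    (Summable fun j => ‖adjoint T (f j)‖ ^ 2) ↔ Summable fun i => ‖T (e i)‖ ^ 2 := by
  rw [summable_norm_sq_iff, summable_norm_sq_iff, e.tsum_enorm_sq_adjoint_apply f]

-- Both sides are the junk value `0` when `T` is not Hilbert–Schmidt.
theorem HilbertBasis.tsum_norm_sq_adjoint_apply [CompleteSpace E] [CompleteSpace F]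
    (e : HilbertBasis ι 𝕜 E) (f : HilbertBasis ι' 𝕜 F) (T : E →L[𝕜] F) :
    ∑' j, ‖adjoint T (f j)‖ ^ 2 = ∑' i, ‖T (e i)‖ ^ 2 := by
  rw [tsum_norm_sq_eq_toReal, tsum_norm_sq_eq_toReal, e.tsum_enorm_sq_adjoint_apply f]

theorem denseRange_of_injective_adjoint [CompleteSpace E] [CompleteSpace F] (T : E →L[𝕜] F)
    (h : Function.Injective (adjoint T)) : DenseRange T := by
  have : (T : E →ₗ[𝕜] F).rangeᗮ = ⊥ := by
    rw [orthogonal_range, LinearMap.ker_eq_bot]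
    exact h
  rw [← Submodule.topologicalClosure_eq_top_iff,
    ← Submodule.dense_iff_topologicalClosure_eq_top] at this
  exact this

end HilbertSchmidt

section FiniteRankApproximation

variable {𝕜 E F G ι : Type*} [RCLike 𝕜]
  [NormedAddCommGroup E] [InnerProductSpace 𝕜 E]
  [NormedAddCommGroup F] [NormedSpace 𝕜 F]
  [NormedAddCommGroup G] [NormedSpace 𝕜 G]

theorem Orthonormal.sum_rankOne_apply [DecidableEq ι] {v : ι → E} (hv : Orthonormal 𝕜 v)
    (s : Finset ι) (y : ι → G) (j : ι) :
    (∑ i ∈ s, rankOne 𝕜 (y i) (v i)) (v j) = if j ∈ s then y j else 0 := by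
  simp [sum_apply, orthonormal_iff_ite.mp hv]

theorem HilbertBasis.exists_tsum_norm_sq_sub_comp_lt (e : HilbertBasis ℕ 𝕜 E) {S : E →L[𝕜] F}
    (hS : Summable fun i => ‖S (e i)‖ ^ 2) {R : G →L[𝕜] F} (hR : DenseRange R) {ε : ℝ}
    (hε : 0 < ε) : ∃ B : E →L[𝕜] G, ∑' i, ‖(S - R ∘L B) (e i)‖ ^ 2 < ε := by
  obtain ⟨N, hN⟩ : ∃ N, ∑' i, ‖S (e (i + N))‖ ^ 2 < ε / 2 :=
    ((tendsto_sum_nat_add fun i => ‖S (e i)‖ ^ 2).eventually (gt_mem_nhds (half_pos hε))).exists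
  set c := ε / (2 * (N + 1))
  have hc : 0 < c := by positivity
  have hy (i : ℕ) : ∃ y, ‖S (e i) - R y‖ ^ 2 < c := by
    obtain ⟨y, hy⟩ := hR.exists_dist_lt (S (e i)) (Real.sqrt_pos.mpr hc)
    rw [dist_eq_norm] at hy
    exact ⟨y, (Real.lt_sqrt (norm_nonneg _)).mp hy⟩
  choose y hy using hy
  classical
  set B := ∑ i ∈ Finset.range N, rankOne 𝕜 (y i) (e i)
  refine ⟨B, ?_⟩
  have hB (j : ℕ) : B (e j) = if j < N then y j else 0 := by
    simp only [B, e.orthonormal.sum_rankOne_apply, Finset.mem_range]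
  have htail (i : ℕ) : (S - R ∘L B) (e (i + N)) = S (e (i + N)) := by simp [hB]
  have hhead : ∑ i ∈ Finset.range N, ‖(S - R ∘L B) (e i)‖ ^ 2 ≤ N * c := by
    calc ∑ i ∈ Finset.range N, ‖(S - R ∘L B) (e i)‖ ^ 2
        ≤ ∑ i ∈ Finset.range N, c := Finset.sum_le_sum fun i hi => by
          simpa [hB, Finset.mem_range.mp hi] using (hy i).le
      _ = N * c := by simp
  have hNc : N * c < ε / 2 := by
    rw [mul_div_assoc', div_lt_div_iff₀ (by positivity) two_pos]
    nlinarith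
  have hsummable : Summable fun i => ‖(S - R ∘L B) (e i)‖ ^ 2 :=
    (summable_nat_add_iff N).mp (by simpa only [htail] using (summable_nat_add_iff N).mpr hS)
  rw [← hsummable.sum_add_tsum_nat_add N]
  simp only [htail]
  linarith

end FiniteRankApproximation

theorem stmt6_general
    {H : Type*} [NormedAddCommGroup H] [InnerProductSpace ℂ H] [CompleteSpace H]
    (e : HilbertBasis ℕ ℂ H) (ρhalf : H →L[ℂ] H)
    (hpos : ρhalf.IsPositive) (hinj : Function.Injective ρhalf) :
    ∀ κ : H →L[ℂ] H, (Summable fun i => ‖κ (e i)‖ ^ 2) →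
      ∀ ε : ℝ, 0 < ε →
        ∃ A : H →L[ℂ] H, (∑' i, ‖(κ - A ∘L ρhalf) (e i)‖ ^ 2) < ε := by
  intro κ hκ ε hε
  have hρ_adj : adjoint ρhalf = ρhalf := hpos.isSelfAdjoint.adjoint_eq
  have hρ_dense : DenseRange ρhalf := denseRange_of_injective_adjoint ρhalf (by rwa [hρ_adj])
  obtain ⟨B, hB⟩ := e.exists_tsum_norm_sq_sub_comp_lt
    ((e.summable_norm_sq_adjoint_apply_iff e κ).mpr hκ) hρ_dense hε
  refine ⟨adjoint B, ?_⟩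
  have h_adj : adjoint (κ - adjoint B ∘L ρhalf) = adjoint κ - ρhalf ∘L B := by
    rw [map_sub, adjoint_comp, adjoint_adjoint, hρ_adj]
  rwa [← e.tsum_norm_sq_adjoint_apply e, h_adj]

/-- The subspace `{A ρ : A ∈ B(H)}` is dense in the Hilbert space
`S_τ = {lam ∈ S₁ : lam ρ^{-1/2} ∈ S₂}` with inner product
`⟨lam,mu⟩_{st,τ} = Tr((lam ρ^{-1/2})* (mu ρ^{-1/2}))`.  Identifying `lam = κ ∘ ρ^{1/2}`
with its Hilbert–Schmidt part `κ = lam ρ^{-1/2}` (an isometry onto `S₂`), density means: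
for every Hilbert–Schmidt `κ` and `ε > 0` there is a bounded `A` with
`‖κ - A ρ^{1/2}‖_{S₂}² < ε` (note `(A ∘ ρ) ρ^{-1/2} = A ∘ ρ^{1/2}`). -/
theorem stmt6
    {H : Type*} [NormedAddCommGroup H] [InnerProductSpace ℂ H] [CompleteSpace H]
    (e : HilbertBasis ℕ ℂ H) (ρhalf : H →L[ℂ] H)
    (hpos : ρhalf.IsPositive) (hinj : Function.Injective ρhalf)
    (htrρ : Summable fun i => (⟪e i, (ρhalf ∘L ρhalf) (e i)⟫_ℂ).re) :
    ∀ κ : H →L[ℂ] H, (Summable fun i => ‖κ (e i)‖ ^ 2) →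
      ∀ ε : ℝ, 0 < ε →
        ∃ A : H →L[ℂ] H, (∑' i, ‖(κ - A ∘L ρhalf) (e i)‖ ^ 2) < ε :=
  stmt6_general e ρhalf hpos hinj
end

section
/- Let L₀ be skew-adjoint generating the unitary group e^{L₀t}, and G bounded self-adjoint with G ≤ 0, such that e^{L₀t} G = G e^{L₀t} for all t. Then for β_t = e^{L₀t} e^{Gt}, the time averages (1/T)∫₀^T β_t dt converge strongly as T → ∞ to the orthogonal projection onto Null(L₀) ∩ Null(G). -/
/-!
`β t = U t ∘ e^{tG}` is a strongly continuous semigroup of contractions (`e^{tG}` contracts since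
`t ↦ ‖e^{tG} x‖²` has derivative `2 re ⟪e^{tG} x, G e^{tG} x⟫ ≤ 0`), so von Neumann's mean ergodic
argument works in continuous time: the averages fix the fixed vectors of β, the averages of
`β s y - y` are `O(1/T)`, and these vectors span a dense subspace of the orthogonal complement of
the fixed space, because a contraction fixes every vector that its adjoint fixes.
A fixed vector `x` of β has `‖e^{tG} x‖ = ‖x‖`; as `e^{tG}` is self-adjoint, this says
`re ⟪e^{2tG} x, x⟫ = ‖x‖²`, which for the contraction `e^{2tG}` forces `e^{2tG} x = x`.
Hence `G x = 0`, and then `U t x = x`.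
-/

open scoped InnerProductSpace

open Filter Topology Set MeasureTheory

lemma isClosed_setOf_tendsto_of_eventually_lipschitzWith {ι X Y : Type*} [PseudoMetricSpace X]
    [PseudoMetricSpace Y] {l : Filter ι} {F : ι → X → Y} {K : NNReal}
    (hF : ∀ᶠ i in l, LipschitzWith K (F i)) (y : Y) :
    IsClosed {x | Tendsto (F · x) l (𝓝 y)} := by
  obtain ⟨s, hs, hLip⟩ := hF.exists_mem
  have hequi : Equicontinuous fun i : s => F i :=
    (LipschitzWith.uniformEquicontinuous _ K fun i : s => hLip i i.2).equicontinuous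
  have hcomap : map ((↑) : s → ι) (comap (↑) l) = l := map_comap_of_mem (by simpa using hs)
  have := hequi.isClosed_setOfPred_tendsto (l := comap (↑) l) (continuous_const (y := y))
  convert this using 3 with x
  conv_lhs => rw [← hcomap]
  exact tendsto_map'_iff

lemma HasDerivAt.clm_apply_const {E F : Type*} [NormedAddCommGroup E] [NormedSpace ℂ E]
    [NormedAddCommGroup F] [NormedSpace ℂ F] {f : ℝ → E →L[ℂ] F} {f' : E →L[ℂ] F} {t : ℝ}
    (hf : HasDerivAt f f' t) (x : E) : HasDerivAt (fun u => f u x) (f' x) t :=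
  ((ContinuousLinearMap.apply ℂ F x).restrictScalars ℝ).hasFDerivAt.comp_hasDerivAt t hf

lemma continuous_apply_apply_of_norm_le {X E F : Type*} [TopologicalSpace X]
    [NormedAddCommGroup E] [NormedSpace ℂ E] [NormedAddCommGroup F] [NormedSpace ℂ F]
    {U : X → E →L[ℂ] F} {C : ℝ} (hU : ∀ z, Continuous fun t => U t z) (hC : ∀ t, ‖U t‖ ≤ C)
    {f : X → E} (hf : Continuous f) : Continuous fun t => U t (f t) := by
  refine continuous_iff_continuousAt.mpr fun t₀ => ?_
  have hsmall : Tendsto (fun t => U t (f t - f t₀)) (𝓝 t₀) (𝓝 0) := by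
    refine squeeze_zero_norm (fun t => (U t).le_of_opNorm_le (hC t) _) ?_
    simpa using ((hf.sub (continuous_const (y := f t₀))).norm.const_mul C).tendsto t₀
  simpa [ContinuousAt] using hsmall.add ((hU (f t₀)).tendsto t₀)

lemma ContinuousLinearMap.apply_eq_self_of_forall_inner_sub_eq_zero {E : Type*}
    [NormedAddCommGroup E] [InnerProductSpace ℂ E] (f : E →L[ℂ] E) (hf : ‖f‖ ≤ 1) {w : E}
    (hw : ∀ y, ⟪f y - y, w⟫_ℂ = 0) : f w = w := by
  refine eq_of_norm_le_re_inner_eq_norm_sq (𝕜 := ℂ) (by simpa using f.le_of_opNorm_le hf w) ?_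
  have hfw : ⟪f w, w⟫_ℂ = ⟪w, w⟫_ℂ := by rw [← sub_eq_zero, ← inner_sub_left, hw]
  rw [hfw, inner_self_eq_norm_sq_to_K]
  norm_cast

section TimeAverage

variable {E : Type*} [NormedAddCommGroup E] [NormedSpace ℂ E] {β : ℝ → E →L[ℂ] E}

noncomputable def timeAverage (β : ℝ → E →L[ℂ] E) (T : ℝ) (x : E) : E :=
  (1 / T) • ∫ t in (0 : ℝ)..T, β t x

def fixedSubmodule (β : ℝ → E →L[ℂ] E) : Submodule ℂ E where
  carrier := {x | ∀ t, 0 ≤ t → β t x = x}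
  add_mem' hx hy t ht := by rw [map_add, hx t ht, hy t ht]
  zero_mem' t _ := map_zero _
  smul_mem' c x hx t ht := by rw [map_smul, hx t ht]

lemma mem_fixedSubmodule {x : E} : x ∈ fixedSubmodule β ↔ ∀ t, 0 ≤ t → β t x = x := Iff.rfl

lemma isClosed_fixedSubmodule : IsClosed (fixedSubmodule β : Set E) := by
  have : (fixedSubmodule β : Set E) = ⋂ t, ⋂ (_ : 0 ≤ t), {x | β t x = x} := by
    ext; simp [mem_fixedSubmodule]
  rw [this]
  exact isClosed_iInter fun t => isClosed_iInter fun _ => isClosed_eq (β t).continuous continuous_id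

instance [CompleteSpace E] : CompleteSpace (fixedSubmodule β) :=
  isClosed_fixedSubmodule.completeSpace_coe

lemma timeAverage_of_mem_fixedSubmodule [CompleteSpace E] {x : E} (hx : x ∈ fixedSubmodule β)
    {T : ℝ} (hT : 0 < T) : timeAverage β T x = x := by
  have hconst : EqOn (fun t => β t x) (fun _ => x) (uIcc 0 T) := fun t ht =>
    hx t (by rw [uIcc_of_le hT.le] at ht; exact ht.1)
  rw [timeAverage, intervalIntegral.integral_congr hconst, intervalIntegral.integral_const,
    sub_zero, smul_smul, one_div, inv_mul_cancel₀ hT.ne', one_smul]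

lemma norm_integral_apply_le (hβ : ∀ t, 0 ≤ t → ‖β t‖ ≤ 1) {a b : ℝ} (ha : 0 ≤ a) (hb : 0 ≤ b)
    (x : E) : ‖∫ t in a..b, β t x‖ ≤ ‖x‖ * |b - a| := by
  refine intervalIntegral.norm_integral_le_of_norm_le_const fun t ht => ?_
  have ht : 0 ≤ t := (le_min ha hb).trans (uIoc_subset_uIcc ht).1
  simpa using (β t).le_of_opNorm_le (hβ t ht) x

lemma norm_timeAverage_le (hβ : ∀ t, 0 ≤ t → ‖β t‖ ≤ 1) {T : ℝ} (hT : 0 ≤ T) (x : E) :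
    ‖timeAverage β T x‖ ≤ ‖x‖ := by
  rcases hT.eq_or_lt with rfl | hT
  · simp [timeAverage]
  calc ‖timeAverage β T x‖ ≤ T⁻¹ * (‖x‖ * |T - 0|) := by
        rw [timeAverage, norm_smul, one_div, norm_inv, Real.norm_of_nonneg hT.le]
        gcongr
        exact norm_integral_apply_le hβ le_rfl hT.le x
    _ = ‖x‖ := by rw [sub_zero, abs_of_pos hT]; field_simp

lemma timeAverage_smul (T : ℝ) (c : ℂ) (x : E) :
    timeAverage β T (c • x) = c • timeAverage β T x := by
  simp only [timeAverage, map_smul, intervalIntegral.integral_smul, smul_comm (1 / T) c]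

lemma intervalIntegrable_apply (hβ : ∀ x, ContinuousOn (fun t => β t x) (Ici 0)) (x : E)
    {a b : ℝ} (ha : 0 ≤ a) (hb : 0 ≤ b) : IntervalIntegrable (fun t => β t x) volume a b :=
  ((hβ x).mono fun _ ht => (le_min ha hb).trans ht.1).intervalIntegrable

lemma timeAverage_sub (hβ : ∀ x, ContinuousOn (fun t => β t x) (Ici 0)) {T : ℝ} (hT : 0 ≤ T)
    (x y : E) : timeAverage β T (x - y) = timeAverage β T x - timeAverage β T y := by
  simp only [timeAverage, map_sub, intervalIntegral.integral_sub
    (intervalIntegrable_apply hβ x le_rfl hT) (intervalIntegrable_apply hβ y le_rfl hT), smul_sub]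

lemma timeAverage_add (hβ : ∀ x, ContinuousOn (fun t => β t x) (Ici 0)) {T : ℝ} (hT : 0 ≤ T)
    (x y : E) : timeAverage β T (x + y) = timeAverage β T x + timeAverage β T y := by
  simp only [timeAverage, map_add, intervalIntegral.integral_add
    (intervalIntegrable_apply hβ x le_rfl hT) (intervalIntegrable_apply hβ y le_rfl hT), smul_add]

lemma lipschitzWith_timeAverage (hβ : ∀ x, ContinuousOn (fun t => β t x) (Ici 0))
    (hβ₁ : ∀ t, 0 ≤ t → ‖β t‖ ≤ 1) {T : ℝ} (hT : 0 ≤ T) : LipschitzWith 1 (timeAverage β T) :=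
  LipschitzWith.of_dist_le_mul fun x y => by
    simpa [dist_eq_norm, ← timeAverage_sub hβ hT] using norm_timeAverage_le hβ₁ hT (x - y)

def vanishingTimeAverages (hβ : ∀ x, ContinuousOn (fun t => β t x) (Ici 0)) : Submodule ℂ E where
  carrier := {x | Tendsto (timeAverage β · x) atTop (𝓝 0)}
  add_mem' {x y} hx hy := by
    refine (zero_add (0 : E) ▸ hx.add hy).congr' ?_
    filter_upwards [eventually_ge_atTop 0] with T hT using (timeAverage_add hβ hT x y).symm
  zero_mem' := by simp [timeAverage]
  smul_mem' c x hx := by simpa [timeAverage_smul] using hx.const_smul c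

lemma tendsto_timeAverage_apply_sub_self (hβ : ∀ x, ContinuousOn (fun t => β t x) (Ici 0))
    (hβ₁ : ∀ t, 0 ≤ t → ‖β t‖ ≤ 1) (hmul : ∀ s t, 0 ≤ s → 0 ≤ t → β (s + t) = β s ∘L β t)
    {s : ℝ} (hs : 0 ≤ s) (y : E) :
    Tendsto (timeAverage β · (β s y - y)) atTop (𝓝 0) := by
  have hshift : ∀ T, 0 ≤ T → (∫ t in (0 : ℝ)..T, β t (β s y - y)) =
      (∫ t in T..T + s, β t y) - ∫ t in (0 : ℝ)..s, β t y := by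
    intro T hT
    have hcomp : ∀ t ∈ uIcc 0 T, β t (β s y - y) = β (t + s) y - β t y := fun t ht => by
      rw [uIcc_of_le hT] at ht
      rw [hmul t s ht.1 hs, ContinuousLinearMap.comp_apply, map_sub]
    have hint : ∀ {a b}, 0 ≤ a → 0 ≤ b → IntervalIntegrable (fun t => β t y) volume a b :=
      intervalIntegrable_apply hβ y
    have hTs : 0 ≤ T + s := add_nonneg hT hs
    rw [intervalIntegral.integral_congr hcomp, intervalIntegral.integral_sub
      (by simpa using (hint hs hTs).comp_add_right s) (hint le_rfl hT),
      intervalIntegral.integral_comp_add_right (fun t => β t y), zero_add,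
      intervalIntegral.integral_interval_sub_interval_comm' (hint hs hTs) (hint le_rfl hT)
        (hint hs le_rfl)]
  have hbound : ∀ T, 0 < T → ‖timeAverage β T (β s y - y)‖ ≤ 2 * ‖y‖ * s / T := by
    intro T hT
    rw [timeAverage, hshift T hT.le, norm_smul, one_div, norm_inv, Real.norm_of_nonneg hT.le,
      inv_mul_le_iff₀ hT]
    calc _ ≤ ‖∫ t in T..T + s, β t y‖ + ‖∫ t in (0 : ℝ)..s, β t y‖ := norm_sub_le _ _
      _ ≤ ‖y‖ * |T + s - T| + ‖y‖ * |s - 0| := by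
        gcongr
        · exact norm_integral_apply_le hβ₁ hT.le (add_nonneg hT.le hs) y
        · exact norm_integral_apply_le hβ₁ le_rfl hs y
      _ = T * (2 * ‖y‖ * s / T) := by
        rw [add_sub_cancel_left, sub_zero, abs_of_nonneg hs]
        field_simp
        ring
  refine squeeze_zero_norm' (a := fun T => 2 * ‖y‖ * s / T) ?_
    (tendsto_const_nhds.div_atTop tendsto_id)
  filter_upwards [eventually_gt_atTop 0] with T hT using hbound T hT


lemma isClosed_vanishingTimeAverages (hβ : ∀ x, ContinuousOn (fun t => β t x) (Ici 0))
    (hβ₁ : ∀ t, 0 ≤ t → ‖β t‖ ≤ 1) : IsClosed (vanishingTimeAverages hβ : Set E) :=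
  isClosed_setOf_tendsto_of_eventually_lipschitzWith
    (eventually_ge_atTop 0 |>.mono fun _ hT => lipschitzWith_timeAverage hβ hβ₁ hT) 0

end TimeAverage

theorem tendsto_timeAverage_starProjection {E : Type*} [NormedAddCommGroup E]
    [InnerProductSpace ℂ E] [CompleteSpace E] {β : ℝ → E →L[ℂ] E}
    (hβ : ∀ x, ContinuousOn (fun t => β t x) (Ici 0)) (hβ₁ : ∀ t, 0 ≤ t → ‖β t‖ ≤ 1)
    (hmul : ∀ s t, 0 ≤ s → 0 ≤ t → β (s + t) = β s ∘L β t) (x : E) :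
    Tendsto (timeAverage β · x) atTop (𝓝 ((fixedSubmodule β).starProjection x)) := by
  set K := fixedSubmodule β
  set S : Set E := {v | ∃ s, 0 ≤ s ∧ ∃ y, v = β s y - y}
  have hS : (Submodule.span ℂ S).topologicalClosure ≤ vanishingTimeAverages hβ := by
    refine Submodule.topologicalClosure_minimal _ ?_ (isClosed_vanishingTimeAverages hβ hβ₁)
    rw [Submodule.span_le]
    rintro _ ⟨s, hs, y, rfl⟩
    exact tendsto_timeAverage_apply_sub_self hβ hβ₁ hmul hs y
  have hK : Kᗮ ≤ (Submodule.span ℂ S).topologicalClosure := by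
    rw [← Submodule.orthogonal_orthogonal_eq_closure]
    refine Submodule.orthogonal_le fun w hw s hs => ?_
    refine (β s).apply_eq_self_of_forall_inner_sub_eq_zero (hβ₁ s hs) fun y => ?_
    exact (Submodule.mem_orthogonal _ w).mp hw _ (Submodule.subset_span ⟨s, hs, y, rfl⟩)
  have hfix : ∀ᶠ T in atTop,
      K.starProjection x + timeAverage β T (x - K.starProjection x) = timeAverage β T x := by
    filter_upwards [eventually_gt_atTop 0] with T hT
    rw [timeAverage_sub hβ hT.le,
      timeAverage_of_mem_fixedSubmodule (K.starProjection_apply_mem x) hT, add_sub_cancel]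
  simpa using (tendsto_const_nhds.add (hS (hK (K.sub_starProjection_mem_orthogonal x)))).congr' hfix

section Exp

variable {H : Type*} [NormedAddCommGroup H] [NormedSpace ℂ H] [CompleteSpace H] {G : H →L[ℂ] H}

-- The lemmas on `NormedSpace.exp` ask for a `ℚ`-algebra structure, which is not inferred here.
noncomputable local instance : NormedAlgebra ℚ (H →L[ℂ] H) := NormedAlgebra.restrictScalars ℚ ℂ _

lemma exp_add_smul (G : H →L[ℂ] H) (s t : ℝ) :
    NormedSpace.exp ((s + t) • G) = NormedSpace.exp (s • G) * NormedSpace.exp (t • G) := by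
  rw [add_smul, NormedSpace.exp_add_of_commute (((Commute.refl G).smul_left s).smul_right t)]

lemma continuous_exp_smul (G : H →L[ℂ] H) : Continuous fun t : ℝ => NormedSpace.exp (t • G) := by
  fun_prop

lemma exp_smul_apply_of_apply_eq_zero {x : H} (hx : G x = 0) (t : ℝ) :
    NormedSpace.exp (t • G) x = x := by
  have hd : ∀ u : ℝ, HasDerivAt (fun u : ℝ => NormedSpace.exp (u • G) x) 0 u := fun u => by
    simpa [hx] using (hasDerivAt_exp_smul_const (𝕂 := ℝ) G u).clm_apply_const x
  simpa using
    is_const_of_deriv_eq_zero (fun u => (hd u).differentiableAt) (fun u => (hd u).deriv) t 0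

lemma comp_exp_smul_add {U : ℝ → H →L[ℂ] H} (hgrp : ∀ s t, U (s + t) = U s ∘L U t)
    (hcomm : ∀ t, Commute (U t) G) (s t : ℝ) :
    U (s + t) ∘L NormedSpace.exp ((s + t) • G) =
      (U s ∘L NormedSpace.exp (s • G)) ∘L (U t ∘L NormedSpace.exp (t • G)) := by
  change U (s + t) * NormedSpace.exp ((s + t) • G) =
    U s * NormedSpace.exp (s • G) * (U t * NormedSpace.exp (t • G))
  rw [hgrp, exp_add_smul]
  change U s * U t * _ = _
  rw [mul_assoc, ← mul_assoc (U t), (((hcomm t).smul_right s).exp_right).eq]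
  noncomm_ring

end Exp

section DissipativeExp

variable {H : Type*} [NormedAddCommGroup H] [InnerProductSpace ℂ H] [CompleteSpace H]
  {G : H →L[ℂ] H}

lemma norm_exp_smul_le_one (hG : ∀ x, (⟪x, G x⟫_ℂ).re ≤ 0) {t : ℝ} (ht : 0 ≤ t) :
    ‖NormedSpace.exp (t • G)‖ ≤ 1 := by
  let _ := InnerProductSpace.complexToReal (G := H)
  refine ContinuousLinearMap.opNorm_le_bound _ zero_le_one fun x => ?_
  have hanti : Antitone fun u : ℝ => ‖NormedSpace.exp (u • G) x‖ ^ 2 := by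
    refine antitone_of_hasDerivAt_nonpos
      (fun u => ((hasDerivAt_exp_smul_const' (𝕂 := ℝ) G u).clm_apply_const x).norm_sq) fun u => ?_
    have := hG (NormedSpace.exp (u • G) x)
    change 2 * (⟪_, G (NormedSpace.exp (u • G) x)⟫_ℂ).re ≤ 0
    linarith
  have := hanti ht
  simp only [zero_smul, NormedSpace.exp_zero] at this
  rw [one_mul]
  exact pow_le_pow_iff_left₀ (norm_nonneg _) (norm_nonneg _) two_ne_zero |>.mp this

lemma exp_smul_apply_eq_self_of_norm_eq (hGsa : IsSelfAdjoint G) (hG : ∀ x, (⟪x, G x⟫_ℂ).re ≤ 0)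
    {x : H} (h : ∀ t : ℝ, 0 ≤ t → ‖NormedSpace.exp (t • G) x‖ = ‖x‖) {t : ℝ} (ht : 0 ≤ t) :
    NormedSpace.exp (t • G) x = x := by
  refine eq_of_norm_le_re_inner_eq_norm_sq (𝕜 := ℂ)
    (by simpa using (NormedSpace.exp (t • G)).le_of_opNorm_le (norm_exp_smul_le_one hG ht) x) ?_
  set E := NormedSpace.exp ((t / 2) • G)
  have hE : IsSelfAdjoint E := ((IsSelfAdjoint.all (t / 2)).smul hGsa).exp
  have hsq : NormedSpace.exp (t • G) x = E (E x) := by rw [← add_halves t, exp_add_smul]; rfl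
  rw [hsq, ← ContinuousLinearMap.adjoint_inner_right, hE.adjoint_eq, inner_self_eq_norm_sq_to_K,
    h _ (by positivity)]
  norm_cast

lemma apply_eq_zero_of_norm_exp_smul_apply_eq (hGsa : IsSelfAdjoint G)
    (hG : ∀ x, (⟪x, G x⟫_ℂ).re ≤ 0) {x : H}
    (h : ∀ t : ℝ, 0 ≤ t → ‖NormedSpace.exp (t • G) x‖ = ‖x‖) : G x = 0 := by
  have hderiv : HasDerivWithinAt (fun u : ℝ => NormedSpace.exp (u • G) x) (G x) (Ici 0) 0 := by
    simpa using ((hasDerivAt_exp_smul_const (𝕂 := ℝ) G 0).clm_apply_const x).hasDerivWithinAt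
  have hconst : HasDerivWithinAt (fun u : ℝ => NormedSpace.exp (u • G) x) 0 (Ici 0) 0 :=
    (hasDerivWithinAt_const 0 _ x).congr
      (fun _ hu => exp_smul_apply_eq_self_of_norm_eq hGsa hG h hu)
      (exp_smul_apply_eq_self_of_norm_eq hGsa hG h le_rfl)
  exact (uniqueDiffOn_Ici 0 0 self_mem_Ici).eq_deriv _ hderiv hconst

lemma mem_fixedSubmodule_comp_exp_smul_iff {U : ℝ → H →L[ℂ] H}
    (hgrp : ∀ s t, U (s + t) = U s ∘L U t) (h0 : U 0 = 1) (hU : ∀ t, U t ∈ unitary (H →L[ℂ] H))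
    (hGsa : IsSelfAdjoint G) (hG : ∀ x, (⟪x, G x⟫_ℂ).re ≤ 0) {x : H} :
    x ∈ fixedSubmodule (fun t => U t ∘L NormedSpace.exp (t • G)) ↔
      (∀ t, U t x = x) ∧ G x = 0 := by
  refine ⟨fun hx => ?_, fun ⟨hUx, hGx⟩ t _ => by simp [exp_smul_apply_of_apply_eq_zero hGx, hUx]⟩
  have hGx : G x = 0 := apply_eq_zero_of_norm_exp_smul_apply_eq hGsa hG fun t ht => by
    rw [← (U t).norm_map_of_mem_unitary (hU t)]
    exact congrArg norm (hx t ht)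
  have hUx : ∀ t, 0 ≤ t → U t x = x := fun t ht => by
    simpa [exp_smul_apply_of_apply_eq_zero hGx] using hx t ht
  refine ⟨fun t => ?_, hGx⟩
  rcases le_total 0 t with ht | ht
  · exact hUx t ht
  · calc U t x = U t (U (-t) x) := by rw [hUx (-t) (neg_nonneg.mpr ht)]
      _ = x := by rw [← ContinuousLinearMap.comp_apply, ← hgrp, add_neg_cancel, h0]; rfl

end DissipativeExp

/-- Let `L₀` be skew-adjoint generating the strongly continuous unitary
group `U t = e^{L₀ t}` (encoded via Stone's theorem), and let `G` be a bounded
self-adjoint operator with `G ≤ 0` commuting with the group: `U t ∘ G = G ∘ U t`.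
Then for `β_t = U t ∘ e^{tG}`, the time averages `(1/T)∫₀^T β_t dt` converge strongly
as `T → ∞` to the orthogonal projection onto `Null(L₀) ∩ Null(G)`: there is a
self-adjoint idempotent `P` whose fixed points are exactly the vectors `x` with
`U t x = x` for all `t` (i.e. `x ∈ Null(L₀)`) and `G x = 0`, such that for every `x`,
`(1/T)∫₀^T U t (e^{tG} x) dt → P x`. -/
theorem stmt11
    {H : Type*} [NormedAddCommGroup H] [InnerProductSpace ℂ H] [CompleteSpace H]
    (U : ℝ → H →L[ℂ] H)
    (hgrp : ∀ s t : ℝ, U (s + t) = U s ∘L U t) (h0 : U 0 = 1)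
    (hunit : ∀ t : ℝ, (U t).adjoint ∘L U t = 1 ∧ U t ∘L (U t).adjoint = 1)
    (hcont : ∀ x : H, Continuous fun t : ℝ => U t x)
    (G : H →L[ℂ] H) (hGsa : IsSelfAdjoint G)
    (hGneg : ∀ x : H, (⟪x, G x⟫_ℂ).re ≤ 0)
    (hcomm : ∀ t : ℝ, U t ∘L G = G ∘L U t) :
    ∃ P : H →L[ℂ] H,
      IsSelfAdjoint P ∧ P ∘L P = P ∧
      (∀ x : H, P x = x ↔ ((∀ t : ℝ, U t x = x) ∧ G x = 0)) ∧
      ∀ x : H,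
        Filter.Tendsto
          (fun T : ℝ => (1 / T) • ∫ t in (0:ℝ)..T, U t ((NormedSpace.exp (t • G)) x))
          Filter.atTop (nhds (P x)) := by
  have hU : ∀ t, U t ∈ unitary (H →L[ℂ] H) := fun t => Unitary.mem_iff.mpr (hunit t)
  have hUnorm : ∀ t, ‖U t‖ ≤ 1 := fun t => (U t).opNorm_le_bound zero_le_one fun x => by
    rw [(U t).norm_map_of_mem_unitary (hU t), one_mul]
  set β : ℝ → H →L[ℂ] H := fun t => U t ∘L NormedSpace.exp (t • G)
  have hβ : ∀ x, Continuous fun t => β t x := fun x =>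
    continuous_apply_apply_of_norm_le hcont hUnorm
      ((continuous_exp_smul G).clm_apply continuous_const)
  have hβ₁ : ∀ t, 0 ≤ t → ‖β t‖ ≤ 1 := fun t ht => by
    simpa only [β, ← ContinuousLinearMap.mul_def, CStarRing.norm_mem_unitary_mul _ (hU t)]
      using norm_exp_smul_le_one hGneg ht
  refine ⟨(fixedSubmodule β).starProjection, isSelfAdjoint_starProjection _,
    (fixedSubmodule β).isIdempotentElem_starProjection.eq, fun x => ?_,
    tendsto_timeAverage_starProjection (fun x => (hβ x).continuousOn) hβ₁
      fun s t _ _ => comp_exp_smul_add hgrp hcomm s t⟩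
  rw [Submodule.starProjection_eq_self_iff]
  exact mem_fixedSubmodule_comp_exp_smul_iff hgrp h0 hU hGsa hGneg
end

section
/- Suppose G' satisfies quantum detailed balance with respect to ρ_τ, Y = ∑_j W_j*W_j commutes with ρ_τ, and G(ρ_τ) = 0. Then Φ(ρ_τ) := ∑_j W_j ρ_τ W_j* = ρ_τ^{1/2} Y ρ_τ^{1/2}, and for every bounded A, Tr(Φ'(A)* Φ'(A) ρ_τ) ≤ ‖Y‖² Tr(A ρ_τ A*), i.e. ‖Φ'(A)‖_τ ≤ ‖Y‖ ‖A‖_{τ,1}. -/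
/-!
Since `ρ = ρhalf²` commutes with `Y`, so does its square root `ρhalf`; hence
`½{Y, ρ} = Y ρ = ρhalf Y ρhalf`.

For the bound, Cauchy–Schwarz in `ℓ²(H)` applied to `⟪x, Φ'(A) v⟫ = ∑ⱼ ⟪Wⱼ x, A Wⱼ v⟫` with
`x = Φ'(A) v`, together with `∑ⱼ ‖Wⱼ x‖² = ⟪x, Y x⟫ ≤ ‖Y‖ ‖x‖²`, gives
`‖Φ'(A) v‖² ≤ ‖Y‖ ∑ⱼ ‖A Wⱼ v‖²`. Put `v = ρhalf eₖ` and sum over `k`: the left side is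
`Tr(Φ'(A)* Φ'(A) ρ)`, the right side `‖Y‖ ∑ⱼ ‖A Wⱼ ρhalf‖²_HS`. A Hilbert–Schmidt norm does not
change under taking adjoints, so this equals
`‖Y‖ ∑ₖ ⟪A* eₖ, Φ(ρ) A* eₖ⟫ = ‖Y‖ ∑ₖ ⟪ρhalf A* eₖ, Y ρhalf A* eₖ⟫ ≤ ‖Y‖² Tr(A ρ A*)`.
-/

open scoped InnerProductSpace

/-- Trace along a Hilbert basis. -/
noncomputable def traceAlong {H : Type*} [NormedAddCommGroup H]
    [InnerProductSpace ℂ H] [CompleteSpace H]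
    (e : HilbertBasis ℕ ℂ H) (T : H →L[ℂ] H) : ℂ :=
  ∑' i, ⟪e i, T (e i)⟫_ℂ

open RCLike ContinuousLinearMap

section

variable {𝕜 E ι κ : Type*} [RCLike 𝕜] [NormedAddCommGroup E] [InnerProductSpace 𝕜 E]

lemma summable_of_tsum_ofReal_ne_top {f : ι → ℝ} (hf : ∀ i, 0 ≤ f i)
    (h : ∑' i, ENNReal.ofReal (f i) ≠ ⊤) : Summable f := by
  simpa only [ENNReal.toReal_ofReal (hf _)] using ENNReal.summable_toReal h

lemma ContinuousLinearMap.summable_norm_sq_apply {V F : Type*} [NormedAddCommGroup V]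
    [NormedSpace 𝕜 V] [NormedAddCommGroup F] [NormedSpace 𝕜 F] (C : V →L[𝕜] F) {f : ι → V}
    (hf : Summable fun i => ‖f i‖ ^ 2) :
    Summable fun i => ‖C (f i)‖ ^ 2 :=
  (hf.mul_left (‖C‖ ^ 2)).of_nonneg_of_le (fun _ => sq_nonneg _) fun i => by
    rw [← mul_pow]
    exact pow_le_pow_left₀ (norm_nonneg _) (C.le_opNorm _) 2

lemma sq_le_mul_of_hasSum_re_inner {a b : ι → E} {s P Q : ℝ}
    (hs : HasSum (fun j => re ⟪a j, b j⟫_𝕜) s) (hP : HasSum (fun j => ‖a j‖ ^ 2) P)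
    (hQ : HasSum (fun j => ‖b j‖ ^ 2) Q) : s ^ 2 ≤ P * Q := by
  have hquad : ∀ t : ℝ, 0 ≤ t * t * P + -2 * t * s + Q := fun t => by
    refine (((hP.mul_left (t * t)).add (hs.mul_left (-2 * t))).add hQ).nonneg fun j => ?_
    have h := norm_sub_sq (𝕜 := 𝕜) ((t : 𝕜) • a j) (b j)
    simp only [norm_smul, inner_smul_left, conj_ofReal, re_ofReal_mul, norm_ofReal, mul_pow,
      sq_abs] at h
    nlinarith [sq_nonneg ‖(t : 𝕜) • a j - b j‖]
  have := discrim_le_zero (a := P) (b := -2 * s) (c := Q) fun t => by linarith [hquad t]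
  rw [discrim] at this
  linarith

lemma ContinuousLinearMap.re_inner_apply_self_le (T : E →L[𝕜] E) (x : E) :
    re ⟪x, T x⟫_𝕜 ≤ ‖T‖ * ‖x‖ ^ 2 :=
  calc re ⟪x, T x⟫_𝕜 ≤ ‖x‖ * ‖T x‖ := re_inner_le_norm _ _
    _ ≤ ‖x‖ * (‖T‖ * ‖x‖) := by gcongr; exact T.le_opNorm x
    _ = ‖T‖ * ‖x‖ ^ 2 := by ring

namespace HilbertBasis

lemma hasSum_norm_sq_inner (b : HilbertBasis ι 𝕜 E) (x : E) :
    HasSum (fun i => ‖⟪b i, x⟫_𝕜‖ ^ 2) (‖x‖ ^ 2) := by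
  have h := b.hasSum_inner_mul_inner x x
  simp only [← inner_conj_symm x (b _), RCLike.conj_mul, inner_self_eq_norm_sq_to_K] at h
  exact_mod_cast h

lemma tsum_ofReal_norm_sq_inner (b : HilbertBasis ι 𝕜 E) (x : E) :
    ∑' i, ENNReal.ofReal (‖⟪b i, x⟫_𝕜‖ ^ 2) = ENNReal.ofReal (‖x‖ ^ 2) := by
  rw [← (b.hasSum_norm_sq_inner x).tsum_eq,
    ENNReal.ofReal_tsum_of_nonneg (fun _ => sq_nonneg _) (b.hasSum_norm_sq_inner x).summable]

end HilbertBasis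

variable [CompleteSpace E]

lemma hasSum_norm_sq_of_hasSum_inner_star_mul_self {B : ι → E →L[𝕜] E} {x : E} {z : 𝕜}
    (h : HasSum (fun j => ⟪x, (star (B j) * B j) x⟫_𝕜) z) :
    HasSum (fun j => ‖B j x‖ ^ 2) (re z) := by
  simpa only [mul_apply_eq_comp, star_eq_adjoint, adjoint_inner_right, inner_self_eq_norm_sq]
    using hasSum_re 𝕜 h

lemma hasSum_norm_sq_apply_star_of_hasSum_inner {W : κ → E →L[𝕜] E} {R Φ : E →L[𝕜] E}
    (hR : IsSelfAdjoint R)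
    (hΦ : ∀ x y, HasSum (fun j => ⟪x, (W j * (R * R) * star (W j)) y⟫_𝕜) ⟪x, Φ y⟫_𝕜) (x : E) :
    HasSum (fun j => ‖R (star (W j) x)‖ ^ 2) (re ⟪x, Φ x⟫_𝕜) := by
  have h : ∀ j, W j * (R * R) * star (W j) = star (R * star (W j)) * (R * star (W j)) := by
    intro j
    rw [star_mul, star_star, hR.star_eq, mul_assoc, mul_assoc, mul_assoc]
  exact hasSum_norm_sq_of_hasSum_inner_star_mul_self (B := fun j => R * star (W j))
    (by simpa only [h] using hΦ x x)

namespace HilbertBasis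

lemma tsum_ofReal_norm_sq_star_apply (b : HilbertBasis ι 𝕜 E) (M : E →L[𝕜] E) :
    ∑' i, ENNReal.ofReal (‖star M (b i)‖ ^ 2) = ∑' i, ENNReal.ofReal (‖M (b i)‖ ^ 2) := by
  simp only [← b.tsum_ofReal_norm_sq_inner, star_eq_adjoint]
  rw [ENNReal.tsum_comm]
  simp only [← norm_inner_symm (b _), adjoint_inner_right]

lemma summable_norm_sq_star_apply (b : HilbertBasis ι 𝕜 E) {M : E →L[𝕜] E}
    (hM : Summable fun i => ‖M (b i)‖ ^ 2) : Summable fun i => ‖star M (b i)‖ ^ 2 := by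
  refine summable_of_tsum_ofReal_ne_top (fun _ => sq_nonneg _) ?_
  rw [b.tsum_ofReal_norm_sq_star_apply]
  exact hM.tsum_ofReal_ne_top

lemma tsum_inner_apply_eq_tsum_inner_mul_star_apply (b : HilbertBasis ι 𝕜 E) {X Z : E →L[𝕜] E}
    (hX : Summable fun i => ‖X (b i)‖ ^ 2) (hZ : Summable fun i => ‖Z (b i)‖ ^ 2) :
    ∑' i, ⟪X (b i), Z (b i)⟫_𝕜 = ∑' k, ⟪b k, (Z * star X) (b k)⟫_𝕜 := by
  let f : ι → ι → 𝕜 := fun i k => ⟪X (b i), b k⟫_𝕜 * ⟪b k, Z (b i)⟫_𝕜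
  have hrow : ∀ i, HasSum (f i) ⟪X (b i), Z (b i)⟫_𝕜 := fun i =>
    b.hasSum_inner_mul_inner _ _
  have hcol : ∀ k, HasSum (fun i => f i k) ⟪b k, (Z * star X) (b k)⟫_𝕜 := fun k => by
    rw [mul_apply_eq_comp, ← adjoint_inner_left, ← star_eq_adjoint]
    refine (b.hasSum_inner_mul_inner (star Z (b k)) (star X (b k))).congr_fun fun i => ?_
    simp only [f, star_eq_adjoint, adjoint_inner_left, adjoint_inner_right, mul_comm]
  -- absolute convergence: AM–GM against the Hilbert–Schmidt sums of `X` and `Z`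
  have hsq : ∀ T : E →L[𝕜] E, Summable (fun i => ‖T (b i)‖ ^ 2) →
      Summable fun p : ι × ι => ‖⟪b p.2, T (b p.1)⟫_𝕜‖ ^ 2 := fun T hT =>
    (summable_prod_of_nonneg (fun _ => sq_nonneg _)).2
      ⟨fun i => (b.hasSum_norm_sq_inner (T (b i))).summable,
        hT.congr fun i => (b.hasSum_norm_sq_inner (T (b i))).tsum_eq.symm⟩
  have habs : Summable (Function.uncurry f) := by
    refine Summable.of_norm_bounded (((hsq X hX).add (hsq Z hZ)).div_const 2) fun p => ?_
    simp only [Function.uncurry, f, norm_mul, norm_inner_symm (X _)]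
    nlinarith [sq_nonneg (‖⟪b p.2, X (b p.1)⟫_𝕜‖ - ‖⟪b p.2, Z (b p.1)⟫_𝕜‖)]
  rw [tsum_congr fun i => (hrow i).tsum_eq.symm, tsum_congr fun k => (hcol k).tsum_eq.symm]
  exact (habs.tsum_comm' (fun i => (hrow i).summable) fun k => (hcol k).summable).symm

end HilbertBasis

variable {W : κ → E →L[𝕜] E} {Y : E →L[𝕜] E}

lemma norm_sq_apply_le_of_hasSum_inner {A B : E →L[𝕜] E}
    (hY : ∀ x, HasSum (fun j => ‖W j x‖ ^ 2) (re ⟪x, Y x⟫_𝕜))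
    (hB : ∀ x y, HasSum (fun j => ⟪x, (star (W j) * A * W j) y⟫_𝕜) ⟪x, B y⟫_𝕜) (v : E) :
    ‖B v‖ ^ 2 ≤ ‖Y‖ * ∑' j, ‖A (W j v)‖ ^ 2 := by
  have hQ : HasSum (fun j => ‖A (W j v)‖ ^ 2) (∑' j, ‖A (W j v)‖ ^ 2) :=
    (A.summable_norm_sq_apply (hY v).summable).hasSum
  have hs : HasSum (fun j => re ⟪W j (B v), A (W j v)⟫_𝕜) (‖B v‖ ^ 2) := by
    simpa only [mul_apply_eq_comp, star_eq_adjoint, adjoint_inner_right, inner_self_eq_norm_sq]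
      using hasSum_re 𝕜 (hB (B v) v)
  have hCS := sq_le_mul_of_hasSum_re_inner hs (hY (B v)) hQ
  have hYB := Y.re_inner_apply_self_le (B v)
  have hQ0 : 0 ≤ ∑' j, ‖A (W j v)‖ ^ 2 := hQ.nonneg fun _ => sq_nonneg _
  have h : ‖B v‖ ^ 2 * ‖B v‖ ^ 2 ≤ ‖B v‖ ^ 2 * (‖Y‖ * ∑' j, ‖A (W j v)‖ ^ 2) := by
    nlinarith [mul_le_mul_of_nonneg_right hYB hQ0]
  rcases (sq_nonneg ‖B v‖).eq_or_lt with h0 | h0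
  · rw [← h0]
    positivity
  · exact le_of_mul_le_mul_left h h0

lemma tsum_ofReal_norm_sq_le (b : HilbertBasis ι 𝕜 E) {R A B : E →L[𝕜] E}
    (hR : IsSelfAdjoint R) (hY : ∀ x, HasSum (fun j => ‖W j x‖ ^ 2) (re ⟪x, Y x⟫_𝕜))
    (hRW : ∀ x, HasSum (fun j => ‖R (star (W j) x)‖ ^ 2) (re ⟪R x, Y (R x)⟫_𝕜))
    (hB : ∀ x y, HasSum (fun j => ⟪x, (star (W j) * A * W j) y⟫_𝕜) ⟪x, B y⟫_𝕜) :
    ∑' k, ENNReal.ofReal (‖B (R (b k))‖ ^ 2) ≤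
      ENNReal.ofReal ‖Y‖ ^ 2 * ∑' k, ENNReal.ofReal (‖R (star A (b k))‖ ^ 2) := by
  have hA : ∀ v, ENNReal.ofReal (∑' j, ‖A (W j v)‖ ^ 2) = ∑' j, ENNReal.ofReal (‖A (W j v)‖ ^ 2) :=
    fun v => ENNReal.ofReal_tsum_of_nonneg (fun _ => sq_nonneg _)
      (A.summable_norm_sq_apply (hY v).summable)
  have hstar : ∀ j, star (A * W j * R) = R * star (W j) * star A := fun j => by
    rw [star_mul, star_mul, hR.star_eq, mul_assoc]
  calc ∑' k, ENNReal.ofReal (‖B (R (b k))‖ ^ 2)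
      ≤ ∑' k, ENNReal.ofReal ‖Y‖ * ∑' j, ENNReal.ofReal (‖A (W j (R (b k)))‖ ^ 2) := by
        refine ENNReal.tsum_le_tsum fun k => ?_
        rw [← hA, ← ENNReal.ofReal_mul (norm_nonneg _)]
        exact ENNReal.ofReal_le_ofReal (norm_sq_apply_le_of_hasSum_inner hY hB _)
    _ = ENNReal.ofReal ‖Y‖ * ∑' j, ∑' k, ENNReal.ofReal (‖(star (A * W j * R)) (b k)‖ ^ 2) := by
        simp only [b.tsum_ofReal_norm_sq_star_apply]
        rw [ENNReal.tsum_mul_left, ENNReal.tsum_comm]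
        rfl
    _ = ENNReal.ofReal ‖Y‖ *
          ∑' k, ENNReal.ofReal (re ⟪R (star A (b k)), Y (R (star A (b k)))⟫_𝕜) := by
        rw [ENNReal.tsum_comm]
        congr 1
        refine tsum_congr fun k => ?_
        rw [← (hRW _).tsum_eq,
          ENNReal.ofReal_tsum_of_nonneg (fun _ => sq_nonneg _) (hRW _).summable]
        simp only [hstar, mul_apply_eq_comp]
    _ ≤ ENNReal.ofReal ‖Y‖ *
          ∑' k, ENNReal.ofReal ‖Y‖ * ENNReal.ofReal (‖R (star A (b k))‖ ^ 2) := by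
        gcongr with k
        rw [← ENNReal.ofReal_mul (norm_nonneg _)]
        exact ENNReal.ofReal_le_ofReal (Y.re_inner_apply_self_le _)
    _ = ENNReal.ofReal ‖Y‖ ^ 2 * ∑' k, ENNReal.ofReal (‖R (star A (b k))‖ ^ 2) := by
        rw [ENNReal.tsum_mul_left, ← mul_assoc, sq]

end

section Trace

variable {H : Type*} [NormedAddCommGroup H] [InnerProductSpace ℂ H] [CompleteSpace H]

lemma re_traceAlong_star_mul_self_mul (e : HilbertBasis ℕ ℂ H) {R : H →L[ℂ] H}
    (hR : IsSelfAdjoint R) (hRe : Summable fun k => ‖R (e k)‖ ^ 2) (T : H →L[ℂ] H) :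
    (traceAlong e (star T * T * (R * R))).re = ∑' k, ‖T (R (e k))‖ ^ 2 := by
  have h := e.tsum_inner_apply_eq_tsum_inner_mul_star_apply (Z := star T * T * R) hRe
    ((star T * T).summable_norm_sq_apply hRe)
  have hk : ∀ k, ⟪R (e k), (star T * T * R) (e k)⟫_ℂ = (‖T (R (e k))‖ ^ 2 : ℝ) := fun k => by
    rw [mul_apply_eq_comp, mul_apply_eq_comp, star_eq_adjoint, adjoint_inner_right,
      inner_self_eq_norm_sq_to_K]
    norm_cast
  rw [hR.star_eq] at h
  rw [traceAlong, ← mul_assoc, ← h, tsum_congr hk, ← Complex.ofReal_tsum, Complex.ofReal_re]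

lemma re_traceAlong_mul_mul_star (e : HilbertBasis ℕ ℂ H) {R : H →L[ℂ] H}
    (hR : IsSelfAdjoint R) (A : H →L[ℂ] H) :
    (traceAlong e (A * (R * R) * star A)).re = ∑' k, ‖R (star A (e k))‖ ^ 2 := by
  have h : ∀ k, ⟪e k, (A * (R * R) * star A) (e k)⟫_ℂ = (‖R (star A (e k))‖ ^ 2 : ℝ) := fun k => by
    rw [mul_apply_eq_comp, mul_apply_eq_comp, mul_apply_eq_comp, ← adjoint_inner_left,
      ← star_eq_adjoint, ← adjoint_inner_left, ← star_eq_adjoint, hR.star_eq,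
      inner_self_eq_norm_sq_to_K]
    norm_cast
  rw [traceAlong, tsum_congr h, ← Complex.ofReal_tsum, Complex.ofReal_re]

lemma re_traceAlong_star_mul_self_mul_le (e : HilbertBasis ℕ ℂ H) {W : κ → H →L[ℂ] H}
    {R Y A B : H →L[ℂ] H} (hR : IsSelfAdjoint R) (hRe : Summable fun k => ‖R (e k)‖ ^ 2)
    (hY : ∀ x, HasSum (fun j => ‖W j x‖ ^ 2) (⟪x, Y x⟫_ℂ).re)
    (hRW : ∀ x, HasSum (fun j => ‖R (star (W j) x)‖ ^ 2) (⟪R x, Y (R x)⟫_ℂ).re)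
    (hB : ∀ x y, HasSum (fun j => ⟪x, (star (W j) * A * W j) y⟫_ℂ) ⟪x, B y⟫_ℂ) :
    (traceAlong e (star B * B * (R * R))).re ≤
      ‖Y‖ ^ 2 * (traceAlong e (A * (R * R) * star A)).re := by
  have hBR : Summable fun k => ‖B (R (e k))‖ ^ 2 := B.summable_norm_sq_apply hRe
  have hRA : Summable fun k => ‖R (star A (e k))‖ ^ 2 := by
    simpa only [star_mul, hR.star_eq, mul_apply_eq_comp] using
      e.summable_norm_sq_star_apply (M := A * R) (A.summable_norm_sq_apply hRe)
  have h := tsum_ofReal_norm_sq_le e hR hY hRW hB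
  rw [← ENNReal.ofReal_tsum_of_nonneg (fun _ => sq_nonneg _) hBR,
    ← ENNReal.ofReal_tsum_of_nonneg (fun _ => sq_nonneg _) hRA,
    ← ENNReal.ofReal_pow (norm_nonneg _), ← ENNReal.ofReal_mul (by positivity),
    ENNReal.ofReal_le_ofReal_iff (by positivity)] at h
  rwa [re_traceAlong_star_mul_self_mul e hR hRe, re_traceAlong_mul_mul_star e hR]

end Trace

theorem stmt15_general
    {H : Type*} [NormedAddCommGroup H] [InnerProductSpace ℂ H] [CompleteSpace H]
    (e : HilbertBasis ℕ ℂ H) (ρhalf ρ : H →L[ℂ] H)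
    (hρ : ρ = ρhalf * ρhalf)
    (hpos : ρhalf.IsPositive)
    (htrρ : Summable fun i => (⟪e i, ρ (e i)⟫_ℂ).re)
    (W : ℕ → H →L[ℂ] H) (Y : H →L[ℂ] H)
    (hY : ∀ x y : H, HasSum (fun j => ⟪x, (star (W j) * W j) y⟫_ℂ) ⟪x, Y y⟫_ℂ)
    (hcomm : Y * ρ = ρ * Y)
    (Φ' : (H →L[ℂ] H) → (H →L[ℂ] H))
    (hΦ' : ∀ (A : H →L[ℂ] H) (x y : H),
      HasSum (fun j => ⟪x, (star (W j) * A * W j) y⟫_ℂ) ⟪x, Φ' A y⟫_ℂ)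
    (Φρ : H →L[ℂ] H)
    (hΦρ : ∀ x y : H, HasSum (fun j => ⟪x, (W j * ρ * star (W j)) y⟫_ℂ) ⟪x, Φρ y⟫_ℂ)
    (hGρ : Φρ = (1/2 : ℂ) • (Y * ρ + ρ * Y)) :
    Φρ = ρhalf * Y * ρhalf ∧
      ∀ A : H →L[ℂ] H,
        (traceAlong e (star (Φ' A) * Φ' A * ρ)).re ≤
          ‖Y‖ ^ 2 * (traceAlong e (A * ρ * star A)).re := by
  subst hρ
  have hR : IsSelfAdjoint ρhalf := hpos.isSelfAdjoint
  have hRY : Commute ρhalf Y := by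
    have h : Commute (CFC.sqrt (ρhalf * ρhalf)) Y := Commute.cfcₙ_nnreal hcomm.symm _
    rwa [CFC.sqrt_mul_self ρhalf ((ContinuousLinearMap.nonneg_iff_isPositive _).2 hpos)] at h
  have hΦρ_eq : Φρ = ρhalf * Y * ρhalf := by
    rw [hGρ, ← hcomm, hRY.eq, ← mul_assoc, ← two_smul ℂ, smul_smul]
    norm_num
  refine ⟨hΦρ_eq, fun A => ?_⟩
  have hRe : Summable fun k => ‖ρhalf (e k)‖ ^ 2 := by
    refine htrρ.congr fun k => ?_
    rw [mul_apply_eq_comp, ← hpos.inner_left_eq_inner_right]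
    exact inner_self_eq_norm_sq (𝕜 := ℂ) _
  have hRW : ∀ x, HasSum (fun j => ‖ρhalf (star (W j) x)‖ ^ 2) (re ⟪ρhalf x, Y (ρhalf x)⟫_ℂ) := by
    intro x
    simpa only [hΦρ_eq, mul_apply_eq_comp, ← hpos.inner_left_eq_inner_right]
      using hasSum_norm_sq_apply_star_of_hasSum_inner hR hΦρ x
  exact re_traceAlong_star_mul_self_mul_le e hR hRe
    (fun x => hasSum_norm_sq_of_hasSum_inner_star_mul_self (hY x x)) hRW (hΦ' A)

/-- Suppose `G'(A) = Φ'(A) − ½{Y,A}` satisfies quantum detailed balance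
with respect to the strictly positive trace-class `ρ = ρhalf²` (symmetry w.r.t.
`⟨A,B⟩_τ = Tr(A* B ρ)`), `Y = ∑_j W_j* W_j` commutes with `ρ`, and `G(ρ) = 0`, i.e.
`Φ(ρ) = ∑_j W_j ρ W_j* = ½{Y, ρ}`.  Then `Φ(ρ) = ρ^{1/2} Y ρ^{1/2}`, and for every
bounded `A`, `Tr(Φ'(A)* Φ'(A) ρ) ≤ ‖Y‖² Tr(A ρ A*)`, i.e. `‖Φ'(A)‖_τ ≤ ‖Y‖ ‖A‖_{τ,1}`. -/
theorem stmt15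
    {H : Type*} [NormedAddCommGroup H] [InnerProductSpace ℂ H] [CompleteSpace H]
    (e : HilbertBasis ℕ ℂ H) (ρhalf ρ : H →L[ℂ] H)
    (hρ : ρ = ρhalf * ρhalf)
    (hpos : ρhalf.IsPositive) (hinj : Function.Injective ρhalf)
    (htrρ : Summable fun i => (⟪e i, ρ (e i)⟫_ℂ).re)
    (W : ℕ → H →L[ℂ] H) (Y : H →L[ℂ] H)
    (hY : ∀ x y : H, HasSum (fun j => ⟪x, (star (W j) * W j) y⟫_ℂ) ⟪x, Y y⟫_ℂ)
    (hcomm : Y * ρ = ρ * Y)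
    (Φ' : (H →L[ℂ] H) → (H →L[ℂ] H))
    (hΦ' : ∀ (A : H →L[ℂ] H) (x y : H),
      HasSum (fun j => ⟪x, (star (W j) * A * W j) y⟫_ℂ) ⟪x, Φ' A y⟫_ℂ)
    (hQDB : ∀ A B : H →L[ℂ] H,
      traceAlong e (star (Φ' A - (1/2 : ℂ) • (Y * A + A * Y)) * B * ρ) =
        traceAlong e (star A * (Φ' B - (1/2 : ℂ) • (Y * B + B * Y)) * ρ))
    (Φρ : H →L[ℂ] H)
    (hΦρ : ∀ x y : H, HasSum (fun j => ⟪x, (W j * ρ * star (W j)) y⟫_ℂ) ⟪x, Φρ y⟫_ℂ)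
    (hGρ : Φρ = (1/2 : ℂ) • (Y * ρ + ρ * Y)) :
    Φρ = ρhalf * Y * ρhalf ∧
      ∀ A : H →L[ℂ] H,
        (traceAlong e (star (Φ' A) * Φ' A * ρ)).re ≤
          ‖Y‖ ^ 2 * (traceAlong e (A * ρ * star A)).re :=
  stmt15_general e ρhalf ρ hρ hpos htrρ W Y hY hcomm Φ' hΦ' Φρ hΦρ hGρ
end
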